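/- Let u ∈ M(A,I) be a nonempty connected trace, m ≥ 2, x ∈ ℕ, and y₁,...,y_m traces with u^x = y₁y₂⋯y_m. Then there exist traces p_{i,j} (1 ≤ j < i ≤ m), s_i (1 ≤ i ≤ m) and numbers x_i, c_j ∈ ℕ such that: y_i = (∏_{j=1}^{i-1} p_{i,j}) u^{x_i} s_i for all i; p_{i,j} I p_{k,ℓ} whenever j < ℓ < k < i, and p_{i,j} I (u^{x_k} s_k) whenever j < k < i; s_m = 1, and s_j ∏_{i=j+1}^m p_{i,j} = u^{c_j} with c_j ≤ |A| for all 1 ≤ j < m; and x = Σ_{i=1}^m x_i + Σ_{j=1}^{m-1} c_j. -/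

import Mathlib

/-- The commutation relation on words generated by an independence relation. -/
def traceRel (A : Type) (I : A → A → Prop) : FreeMonoid A → FreeMonoid A → Prop :=
  fun x y => ∃ a b, I a b ∧ x = FreeMonoid.of a * FreeMonoid.of b ∧ y = FreeMonoid.of b * FreeMonoid.of a

/-- The trace congruence ≡_I. -/
def traceCon (A : Type) (I : A → A → Prop) : Con (FreeMonoid A) := conGen (traceRel A I)

/-- The trace monoid M(A,I). -/
abbrev Trace (A : Type) (I : A → A → Prop) := (traceCon A I).Quotient

/-- The trace represented by a word. -/
def trc (A : Type) (I : A → A → Prop) (w : FreeMonoid A) : Trace A I := (traceCon A I).mk' w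

/-- s I t: every letter of s is independent of every letter of t. -/
def TraceIndep (A : Type) (I : A → A → Prop) (s t : Trace A I) : Prop :=
  ∀ w w' : FreeMonoid A, s = trc A I w → t = trc A I w' →
    ∀ a ∈ w.toList, ∀ b ∈ w'.toList, I a b

/-- A trace is connected if it has no nontrivial factorization into independent factors. -/
def TraceConnected (A : Type) (I : A → A → Prop) (t : Trace A I) : Prop :=
  ∀ u v : Trace A I, t = u * v → TraceIndep A I u v → u = 1 ∨ v = 1

/-- The set of prefixes of a trace. -/
def tracePrefixes (A : Type) (I : A → A → Prop) (t : Trace A I) : Set (Trace A I) :=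
  {p | ∃ q, t = p * q}

/-!
The trace monoid is cancellative and satisfies Levi's lemma; both follow from the projection
lemma: two words represent the same trace iff their projections onto every pair of dependent
letters agree. If `s * t = u ^ N` where `s` does not start and `t` does not end with `u`, then
`N ≤ |A|`: Levi's lemma cuts each copy of `u` as `R n * W n` with `R j` independent of `W n` for
`n < j`, so the alphabets of the `W n` increase, and connectedness of `u` makes the increase strict.

The factors are then treated from left to right. Before `y i`, what remains of `u ^ x` is
`r 0 ⋯ r (i - 1) * u ^ X`, where `r j` is what `y j` still owes towards its power `u ^ c j`.
Levi's lemma across this product splits `y i` into pieces `p i j` of the `r j` followed by a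
prefix `a` of `u ^ X`; writing `a = u ^ x i * s i` and the rest as `τ * u ^ l` with maximal powers
split off, the bound above gives `s i * τ = u ^ c i` with `c i ≤ |A|`, and `τ` is the new debt
of `y i`.
-/

namespace List

lemma prod_map_range_update {M : Type*} [Monoid M] (f : ℕ → M) (n : ℕ) (x : M) :
    ((range (n + 1)).map (Function.update f n x)).prod = ((range n).map f).prod * x := by
  rw [prod_range_succ, Function.update_self,
    map_congr_left fun k hk => Function.update_of_ne (mem_range.1 hk).ne x f]

lemma mem_drop_range {M i k : ℕ} : k ∈ (range M).drop i ↔ i ≤ k ∧ k < M := by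
  simp only [range_eq_range', drop_range', mem_range'_1]
  omega

lemma drop_range_eq_cons {M i : ℕ} (h : i < M) :
    (range M).drop i = i :: (range M).drop (i + 1) := by
  rw [drop_eq_getElem_cons (by simpa), getElem_range]

lemma map_drop_range_update {β γ : Type*} (f : ℕ → β) (g : β → γ) (M i : ℕ) (x : β) :
    ((range M).drop (i + 1)).map (fun k => g (Function.update f i x k)) =
      ((range M).drop (i + 1)).map (fun k => g (f k)) :=
  map_congr_left fun k hk => by
    rw [Function.update_of_ne (by have := (mem_drop_range.1 hk).1; omega)]

lemma map_take_finRange {β : Type*} (f : ℕ → β) (m i : ℕ) :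
    ((finRange m).take i).map (fun j : Fin m => f j.val) = ((range m).take i).map f := by
  rw [← map_coe_finRange_eq_range, ← map_take, map_map]; rfl

lemma map_drop_finRange {β : Type*} (f : ℕ → β) (m i : ℕ) :
    ((finRange m).drop i).map (fun j : Fin m => f j.val) = ((range m).drop i).map f := by
  rw [← map_coe_finRange_eq_range, ← map_drop, map_map]; rfl

end List

namespace Trace

variable {A : Type} {I : A → A → Prop}

variable (I) in
def ofList (w : List A) : Trace A I := trc A I (FreeMonoid.ofList w)

@[simp]
lemma ofList_nil : ofList I ([] : List A) = 1 := map_one _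

lemma ofList_append (v w : List A) : ofList I (v ++ w) = ofList I v * ofList I w :=
  map_mul (traceCon A I).mk' _ _

lemma ofList_cons (a : A) (w : List A) : ofList I (a :: w) = ofList I [a] * ofList I w :=
  ofList_append [a] w

lemma exists_eq_ofList (t : Trace A I) : ∃ w, t = ofList I w := by
  obtain ⟨w, rfl⟩ := Con.mk'_surjective t
  exact ⟨FreeMonoid.toList w, rfl⟩

lemma ofList_swap {a b : A} (h : I a b) : ofList I [a, b] = ofList I [b, a] :=
  (traceCon A I).eq.2 (ConGen.Rel.of _ _ ⟨a, b, h, rfl, rfl⟩)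

lemma rel_of_ofList_eq {R : List A → List A → Prop} (hR : Equivalence R)
    (happend : ∀ {v v' w w'}, R v v' → R w w' → R (v ++ w) (v' ++ w'))
    (hswap : ∀ a b, I a b → R [a, b] [b, a]) {w w' : List A} (h : ofList I w = ofList I w') :
    R w w' := by
  suffices ∀ x y, ConGen.Rel (traceRel A I) x y → R (FreeMonoid.toList x) (FreeMonoid.toList y) from
    this _ _ ((traceCon A I).eq.1 h)
  intro x y hrel
  induction hrel with
  | of x y hxy => obtain ⟨a, b, hab, rfl, rfl⟩ := hxy; exact hswap a b hab
  | refl => exact hR.refl _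
  | symm _ ih => exact hR.symm ih
  | trans _ _ ih₁ ih₂ => exact hR.trans ih₁ ih₂
  | mul _ _ ih₁ ih₂ => exact happend ih₁ ih₂

lemma perm_of_ofList_eq {w w' : List A} (h : ofList I w = ofList I w') : w.Perm w' :=
  rel_of_ofList_eq (List.Perm.eqv A) List.Perm.append (fun a b _ => List.Perm.swap b a []) h

def letters (t : Trace A I) : Multiset A :=
  Con.liftOn t (fun w => (FreeMonoid.toList w : Multiset A)) fun _ _ h =>
    Multiset.coe_eq_coe.2 (perm_of_ofList_eq (w := FreeMonoid.toList _) ((traceCon A I).eq.2 h))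

@[simp]
lemma letters_ofList (w : List A) : letters (ofList I w) = (w : Multiset A) := rfl

@[simp]
lemma letters_one : letters (1 : Trace A I) = 0 := rfl

@[simp]
lemma letters_mul (s t : Trace A I) : letters (s * t) = letters s + letters t := by
  obtain ⟨v, rfl⟩ := exists_eq_ofList s
  obtain ⟨w, rfl⟩ := exists_eq_ofList t
  simp [← ofList_append]

@[simp]
lemma letters_pow (t : Trace A I) (n : ℕ) : letters (t ^ n) = n • letters t := by
  induction n with
  | zero => simp
  | succ n ih => rw [pow_succ, letters_mul, ih, succ_nsmul]

@[simp]
lemma letters_eq_zero {t : Trace A I} : letters t = 0 ↔ t = 1 := by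
  refine ⟨fun h => ?_, fun h => h ▸ letters_one⟩
  obtain ⟨w, rfl⟩ := exists_eq_ofList t
  simp_all

lemma letters_le_prod_of_mem {ι : Type*} {l : List ι} {f : ι → Trace A I} {i : ι} (hi : i ∈ l) :
    letters (f i) ≤ letters (l.map f).prod := by
  induction l with
  | nil => cases hi
  | cons j l ih =>
    rw [List.map_cons, List.prod_cons, letters_mul]
    rcases List.mem_cons.1 hi with rfl | hi
    · exact le_self_add
    · exact (ih hi).trans le_add_self

lemma mul_eq_one {s t : Trace A I} : s * t = 1 ↔ s = 1 ∧ t = 1 := by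
  simp only [← letters_eq_zero, letters_mul, add_eq_zero]

lemma pow_eq_one {u : Trace A I} (hu : u ≠ 1) {n : ℕ} : u ^ n = 1 ↔ n = 0 := by
  rw [← letters_eq_zero, letters_pow, smul_eq_zero, letters_eq_zero]
  exact or_iff_left hu

def Indep (s t : Trace A I) : Prop := ∀ a ∈ letters s, ∀ b ∈ letters t, I a b

lemma Indep.traceIndep {s t : Trace A I} (h : Indep s t) : TraceIndep A I s t := by
  rintro w w' rfl rfl a ha b hb
  exact h a (Multiset.mem_coe.2 ha) b (Multiset.mem_coe.2 hb)

lemma Indep.symm [Std.Symm I] {s t : Trace A I} (h : Indep s t) : Indep t s :=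
  fun a ha b hb => Std.Symm.symm _ _ (h b hb a ha)

lemma Indep.mono {s t s' t' : Trace A I} (h : Indep s t) (hs : letters s' ≤ letters s)
    (ht : letters t' ≤ letters t) : Indep s' t' :=
  fun a ha b hb => h a (Multiset.subset_of_le hs ha) b (Multiset.subset_of_le ht hb)

lemma Indep.mul_left {s s' t : Trace A I} (h : Indep s t) (h' : Indep s' t) : Indep (s * s') t := by
  intro a ha b hb
  rcases Multiset.mem_add.1 (letters_mul s s' ▸ ha) with ha | ha
  exacts [h a ha b hb, h' a ha b hb]

lemma commute_ofList {v w : List A} (h : ∀ a ∈ v, ∀ b ∈ w, I a b) :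
    Commute (ofList I v) (ofList I w) := by
  induction v with
  | nil => exact Commute.one_left _
  | cons a v ihv =>
    rw [ofList_cons]
    refine Commute.mul_left ?_ (ihv fun c hc => h c (List.mem_cons_of_mem a hc))
    clear ihv
    induction w with
    | nil => exact Commute.one_right _
    | cons b w ihw =>
      rw [ofList_cons]
      have hab : Commute (ofList I [a]) (ofList I [b]) := by
        rw [Commute, SemiconjBy, ← ofList_append, ← ofList_append]
        exact ofList_swap (h a List.mem_cons_self b List.mem_cons_self)
      exact hab.mul_right (ihw fun c hc d hd => h c hc d (List.mem_cons_of_mem b hd))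

lemma Indep.commute {s t : Trace A I} (h : Indep s t) : Commute s t := by
  obtain ⟨v, rfl⟩ := exists_eq_ofList s
  obtain ⟨w, rfl⟩ := exists_eq_ofList t
  exact commute_ofList fun a ha b hb => h a (Multiset.mem_coe.2 ha) b (Multiset.mem_coe.2 hb)

lemma ofList_append_cons {a : A} {l₁ l₂ : List A} (h : ∀ b ∈ l₁, I a b) :
    ofList I (l₁ ++ a :: l₂) = ofList I [a] * ofList I (l₁ ++ l₂) := by
  rw [ofList_append, ofList_cons, ← mul_assoc,
    (commute_ofList fun c hc b hb => List.eq_of_mem_singleton hc ▸ h b hb).eq.symm,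
    mul_assoc, ← ofList_append]

open Classical in
noncomputable def proj (a b : A) (w : List A) : List A := w.filter fun c => c = a ∨ c = b

lemma proj_append (a b : A) (v w : List A) : proj a b (v ++ w) = proj a b v ++ proj a b w :=
  List.filter_append ..

lemma mem_proj {a b c : A} {w : List A} : c ∈ proj a b w ↔ c ∈ w ∧ (c = a ∨ c = b) := by
  simp [proj]

lemma proj_cons_cancel {a b c : A} {v w : List A} (h : proj a b (c :: v) = proj a b (c :: w)) :
    proj a b v = proj a b w := by
  simp only [proj, List.filter_cons] at h
  split_ifs at h
  exacts [List.cons_injective h, h]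

lemma forall_indep_of_proj_eq {a : A} {v l₁ l₂ : List A} (ha : a ∉ l₁)
    (h : ∀ b, ¬ I a b → proj a b (a :: v) = proj a b (l₁ ++ a :: l₂)) : ∀ b ∈ l₁, I a b := by
  intro b hb
  by_contra hab
  obtain ⟨c, cs, hc⟩ := List.ne_nil_iff_exists_cons.1
    (List.ne_nil_of_mem (mem_proj.2 ⟨hb, Or.inr rfl⟩))
  have hhead := h b hab
  rw [proj_append, hc] at hhead
  simp only [proj, List.filter_cons, true_or, decide_true, List.cons_append] at hhead
  obtain rfl := (List.cons.inj hhead).1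
  exact ha (mem_proj.1 (hc ▸ List.mem_cons_self)).1

lemma proj_eq_of_ofList_eq [Std.Irrefl I] [Std.Symm I] {a b : A} (hab : ¬ I a b) {w w' : List A}
    (h : ofList I w = ofList I w') : proj a b w = proj a b w' := by
  refine rel_of_ofList_eq (R := fun v v' => proj a b v = proj a b v')
    ⟨fun _ => rfl, Eq.symm, Eq.trans⟩ (fun h₁ h₂ => by rw [proj_append, proj_append, h₁, h₂])
    (fun c d hcd => ?_) h
  have hcd' : c ≠ d := by rintro rfl; exact Std.Irrefl.irrefl c hcd
  have : ¬ ((c = a ∨ c = b) ∧ (d = a ∨ d = b)) := by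
    rintro ⟨rfl | rfl, rfl | rfl⟩ <;> simp_all [Std.Symm.symm _ _ hcd]
  simp only [proj, List.filter_cons, List.filter_nil]
  split_ifs <;> simp_all

lemma ofList_eq_of_proj_eq [Std.Irrefl I] [Std.Symm I] {w w' : List A}
    (h : ∀ a b, ¬ I a b → proj a b w = proj a b w') :
    ofList I w = ofList I w' := by
  induction w generalizing w' with
  | nil =>
    cases w' with
    | nil => rfl
    | cons c w' =>
      have := h c c (Std.Irrefl.irrefl c)
      simp [proj] at this
  | cons a v ih =>
    have ha : a ∈ w' := (mem_proj.1 ((h a a (Std.Irrefl.irrefl a)) ▸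
      mem_proj.2 ⟨List.mem_cons_self, Or.inl rfl⟩)).1
    obtain ⟨l₁, l₂, rfl, ha₁⟩ := List.eq_append_cons_of_mem ha
    have hind := forall_indep_of_proj_eq ha₁ (h a)
    rw [ofList_append_cons hind, ofList_cons]
    refine congrArg _ (ih fun b c hbc => proj_cons_cancel (a := b) (b := c) (c := a) ?_)
    rw [h b c hbc]
    exact proj_eq_of_ofList_eq hbc ((ofList_append_cons hind).trans (ofList_cons _ _).symm)

lemma ofList_eq_ofList_iff [Std.Irrefl I] [Std.Symm I] {w w' : List A} :
    ofList I w = ofList I w' ↔ ∀ a b, ¬ I a b → proj a b w = proj a b w' :=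
  ⟨fun h _ _ hab => proj_eq_of_ofList_eq hab h, ofList_eq_of_proj_eq⟩

instance [Std.Irrefl I] [Std.Symm I] : IsCancelMul (Trace A I) where
  mul_left_cancel s t t' h := by
    obtain ⟨w, rfl⟩ := exists_eq_ofList s
    obtain ⟨v, rfl⟩ := exists_eq_ofList t
    obtain ⟨v', rfl⟩ := exists_eq_ofList t'
    dsimp only at h
    rw [← ofList_append, ← ofList_append, ofList_eq_ofList_iff] at h
    exact ofList_eq_ofList_iff.2 fun a b hab =>
      List.append_cancel_left (by simpa only [proj_append] using h a b hab)
  mul_right_cancel s t t' h := by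
    obtain ⟨w, rfl⟩ := exists_eq_ofList s
    obtain ⟨v, rfl⟩ := exists_eq_ofList t
    obtain ⟨v', rfl⟩ := exists_eq_ofList t'
    dsimp only at h
    rw [← ofList_append, ← ofList_append, ofList_eq_ofList_iff] at h
    exact ofList_eq_ofList_iff.2 fun a b hab =>
      List.append_cancel_right (by simpa only [proj_append] using h a b hab)

lemma ofList_singleton_mul_eq_mul [Std.Irrefl I] [Std.Symm I] {a : A} {x s t : Trace A I}
    (h : ofList I [a] * x = s * t) :
    (∃ s', s = ofList I [a] * s' ∧ x = s' * t) ∨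
      (Indep (ofList I [a]) s ∧ ∃ t', t = ofList I [a] * t' ∧ x = s * t') := by
  obtain ⟨xw, rfl⟩ := exists_eq_ofList x
  obtain ⟨vs, rfl⟩ := exists_eq_ofList s
  obtain ⟨vt, rfl⟩ := exists_eq_ofList t
  rw [← ofList_append, ← ofList_append] at h
  by_cases ha : a ∈ vs
  · obtain ⟨l₁, l₂, rfl, ha₁⟩ := List.eq_append_cons_of_mem ha
    have hind : ∀ b ∈ l₁, I a b := forall_indep_of_proj_eq ha₁ fun b hab =>
      proj_eq_of_ofList_eq hab (by simpa using h)
    have hs := ofList_append_cons (l₂ := l₂) hind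
    refine Or.inl ⟨_, hs, mul_left_cancel (a := ofList I [a]) ?_⟩
    calc ofList I [a] * ofList I xw = ofList I (l₁ ++ a :: l₂ ++ vt) := by rw [← ofList_append, h]
      _ = _ := by rw [ofList_append, hs, mul_assoc]
  · have ha' : a ∈ vt := by
      have := (perm_of_ofList_eq h).mem_iff.1 List.mem_cons_self
      simpa [ha] using this
    obtain ⟨l₁, l₂, rfl, ha₁⟩ := List.eq_append_cons_of_mem ha'
    have hind : ∀ b ∈ vs ++ l₁, I a b :=
      forall_indep_of_proj_eq (by simp [ha, ha₁]) fun b hab =>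
        proj_eq_of_ofList_eq hab (by simpa using h)
    have hsa : Indep (ofList I [a]) (ofList I vs) := by
      intro c hc b hb
      rw [letters_ofList, Multiset.mem_coe, List.mem_singleton] at hc
      exact hc ▸ hind b (List.mem_append_left _ hb)
    have ht := ofList_append_cons (l₂ := l₂) fun b hb => hind b (List.mem_append_right _ hb)
    refine Or.inr ⟨hsa, _, ht, mul_left_cancel (a := ofList I [a]) ?_⟩
    calc ofList I [a] * ofList I xw = ofList I (vs ++ (l₁ ++ a :: l₂)) := by
          rw [← ofList_append, h]
      _ = _ := by rw [ofList_append, ht, ← mul_assoc, ← hsa.commute.eq, mul_assoc]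

theorem exists_levi [Std.Irrefl I] [Std.Symm I] {x y z t : Trace A I} (h : x * y = z * t) :
    ∃ r v w s, x = r * v ∧ z = r * w ∧ y = w * s ∧ t = v * s ∧ Indep v w := by
  obtain ⟨xw, rfl⟩ := exists_eq_ofList x
  induction xw generalizing z t with
  | nil =>
    refine ⟨1, 1, z, t, by simp, by simp, by simpa using h, by simp, ?_⟩
    simp [Indep]
  | cons a xw ih =>
    rw [ofList_cons, mul_assoc] at h
    rcases ofList_singleton_mul_eq_mul h with ⟨z', rfl, h'⟩ | ⟨haz, t', rfl, h'⟩
    · obtain ⟨r, v, w, s, hx, rfl, rfl, rfl, hvw⟩ := ih h'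
      exact ⟨ofList I [a] * r, v, w, s, by rw [ofList_cons, hx, mul_assoc], by rw [mul_assoc],
        rfl, rfl, hvw⟩
    · obtain ⟨r, v, w, s, hx, rfl, rfl, rfl, hvw⟩ := ih h'
      refine ⟨r, ofList I [a] * v, w, s, ?_, rfl, rfl, by rw [mul_assoc], ?_⟩
      · rw [ofList_cons, hx, ← mul_assoc, ← mul_assoc,
          (haz.mono le_rfl (by simp)).commute.eq]
      · exact Indep.mul_left (haz.mono le_rfl (by simp)) hvw

lemma exists_eq_pow_mul_not_dvd {u : Trace A I} (hu : u ≠ 1) (s : Trace A I) :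
    ∃ k s', s = u ^ k * s' ∧ ¬ u ∣ s' := by
  induction hn : Multiset.card (letters s) using Nat.strong_induction_on generalizing s with
  | _ n ih =>
  by_cases hdvd : u ∣ s
  · obtain ⟨s₁, rfl⟩ := hdvd
    have hpos := Multiset.card_pos.2 (mt letters_eq_zero.1 hu)
    obtain ⟨k, s', rfl, hs'⟩ := ih _ (by simp at hn; omega) s₁ rfl
    exact ⟨k + 1, s', by rw [pow_succ', mul_assoc], hs'⟩
  · exact ⟨0, s, by simp, hdvd⟩

lemma exists_eq_mul_pow_not_dvd_right {u : Trace A I} (hu : u ≠ 1) (t : Trace A I) :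
    ∃ l t', t = t' * u ^ l ∧ ¬ ∃ w, t' = w * u := by
  induction hn : Multiset.card (letters t) using Nat.strong_induction_on generalizing t with
  | _ n ih =>
  by_cases hdvd : ∃ w, t = w * u
  · obtain ⟨t₁, rfl⟩ := hdvd
    have hpos := Multiset.card_pos.2 (mt letters_eq_zero.1 hu)
    obtain ⟨l, t', rfl, ht'⟩ := ih _ (by simp at hn; omega) t₁ rfl
    exact ⟨l + 1, t', by rw [pow_succ, mul_assoc], ht'⟩
  · exact ⟨0, t, by simp, hdvd⟩

/-- `u ^ N` cut copy by copy: the `n`-th copy of `u` is `R n * W n`, and later left parts commute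
past earlier right parts. -/
structure IsCut (u : Trace A I) (N : ℕ) (R W : ℕ → Trace A I) : Prop where
  eq_mul : ∀ n < N, u = R n * W n
  indep : ∀ n j, n < j → j < N → Indep (R j) (W n)

theorem exists_isCut [Std.Irrefl I] [Std.Symm I] {u s t : Trace A I} {N : ℕ} (h : s * t = u ^ N) :
    ∃ R W, IsCut u N R W ∧ s = ((List.range N).map R).prod ∧ t = ((List.range N).map W).prod := by
  induction N generalizing s t with
  | zero =>
    obtain ⟨rfl, rfl⟩ := mul_eq_one.1 (by simpa using h)
    exact ⟨1, 1, ⟨by simp, by simp⟩, by simp, by simp⟩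
  | succ N ih =>
    rw [pow_succ] at h
    obtain ⟨r, v, w, σ, rfl, hw, rfl, hvσ, hvw⟩ := exists_levi h
    obtain ⟨R, W, hcut, rfl, rfl⟩ := ih hw.symm
    refine ⟨Function.update R N v, Function.update W N σ, ⟨fun n hn => ?_, fun n j hnj hj => ?_⟩,
      by rw [List.prod_map_range_update], by rw [List.prod_map_range_update]⟩
    · rcases (Nat.lt_succ_iff.1 hn).lt_or_eq with hn | rfl
      · simp only [Function.update_of_ne hn.ne]; exact hcut.eq_mul n hn
      · simpa using hvσ
    · rw [Function.update_of_ne (hnj.trans_le (Nat.lt_succ_iff.1 hj)).ne]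
      rcases (Nat.lt_succ_iff.1 hj).lt_or_eq with hj | rfl
      · rw [Function.update_of_ne hj.ne]; exact hcut.indep n j hnj hj
      · rw [Function.update_self]
        exact hvw.mono le_rfl (letters_le_prod_of_mem (List.mem_range.2 hnj))

namespace IsCut

variable [Std.Irrefl I] {u : Trace A I} {N : ℕ} {R W : ℕ → Trace A I}

lemma letters_subset (hc : IsCut u N R W) {n : ℕ} (hn : n + 1 < N) :
    letters (W n) ⊆ letters (W (n + 1)) := by
  intro a ha
  have hau : a ∈ letters u := by
    rw [hc.eq_mul n (by omega), letters_mul]; exact Multiset.mem_add.2 (Or.inr ha)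
  rw [hc.eq_mul (n + 1) hn, letters_mul] at hau
  exact (Multiset.mem_add.1 hau).resolve_left fun haR =>
    Std.Irrefl.irrefl a (hc.indep n (n + 1) (by omega) hn a haR a ha)

lemma eq_one_of_le (hc : IsCut u N R W) {n j : ℕ} (hn : R n = 1) (hnj : n ≤ j) (hj : j < N) :
    R j = 1 := by
  induction j, hnj using Nat.le_induction with
  | base => exact hn
  | succ j hnj ih =>
    have hWj : W j = u := by rw [hc.eq_mul j (by omega), ih (by omega), one_mul]
    refine letters_eq_zero.1 (Multiset.eq_zero_of_forall_notMem fun a ha => ?_)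
    have haW : a ∈ letters (W j) := by
      rw [hWj, hc.eq_mul (j + 1) hj, letters_mul]; exact Multiset.mem_add.2 (Or.inl ha)
    exact Std.Irrefl.irrefl a (hc.indep j (j + 1) (by omega) hj a ha a haW)

lemma not_letters_subset (hc : IsCut u N R W) (hconn : TraceConnected A I u)
    (hlast : R (N - 1) ≠ 1) {n : ℕ} (hn : n + 1 < N) (hW : W n ≠ 1) :
    ¬ letters (W (n + 1)) ⊆ letters (W n) := by
  intro hsub
  have hindep : Indep (R (n + 1)) (W (n + 1)) := fun a ha b hb =>
    hc.indep n (n + 1) (by omega) hn a ha b (hsub hb)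
  rcases hconn _ _ (hc.eq_mul (n + 1) hn) hindep.traceIndep with hR | hW'
  · exact hlast (hc.eq_one_of_le hR (by omega) (by omega))
  · refine hW (letters_eq_zero.1 (Multiset.subset_zero.1 ?_))
    simpa [hW'] using hc.letters_subset hn

end IsCut

theorem le_card_of_mul_eq_pow [Fintype A] [Std.Irrefl I] [Std.Symm I] {u s t : Trace A I}
    (hconn : TraceConnected A I u) {N : ℕ} (h : s * t = u ^ N) (hs : ¬ u ∣ s)
    (ht : ¬ ∃ w, t = w * u) : N ≤ Fintype.card A := by
  obtain ⟨R, W, hc, rfl, rfl⟩ := exists_isCut h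
  obtain _ | N := N
  · exact Nat.zero_le _
  have hW0 : W 0 ≠ 1 := by
    intro hW0
    have hR0 : R 0 = u := by simpa [hW0] using (hc.eq_mul 0 (by omega)).symm
    exact hs ⟨_, by rw [List.prod_range_succ', hR0]⟩
  have hlast : R N ≠ 1 := by
    intro hR
    have hWN : W N = u := by simpa [hR] using (hc.eq_mul N (by omega)).symm
    exact ht ⟨_, by rw [List.prod_range_succ, hWN]⟩
  classical
  have hcard : ∀ n ≤ N, n + 1 ≤ (letters (W n)).toFinset.card := by
    intro n hn
    induction n with
    | zero => simpa [Finset.card_pos, Multiset.toFinset_eq_empty] using hW0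
    | succ n ih =>
      have hne : W n ≠ 1 := fun h1 => by simpa [h1] using ih (by omega)
      have hlt : (letters (W n)).toFinset ⊂ (letters (W (n + 1))).toFinset := by
        refine Finset.ssubset_iff_subset_ne.2 ⟨Multiset.toFinset_subset.2 (hc.letters_subset
          (by omega)), fun heq => hc.not_letters_subset hconn hlast (by omega) hne ?_⟩
        exact Multiset.toFinset_subset.1 heq.ge
      have := Finset.card_lt_card hlt
      omega
  exact (hcard N le_rfl).trans (Finset.card_le_univ _)

theorem exists_factorization_of_mul_eq_pow [Fintype A] [Std.Irrefl I] [Std.Symm I]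
    {u a b : Trace A I} (hu : u ≠ 1) (hconn : TraceConnected A I u) {N : ℕ} (h : a * b = u ^ N) :
    ∃ k c l σ τ, a = u ^ k * σ ∧ b = τ * u ^ l ∧ σ * τ = u ^ c ∧ c ≤ Fintype.card A ∧
      N = k + c + l ∧ ¬ u ∣ σ := by
  obtain ⟨k, σ, rfl, hσ⟩ := exists_eq_pow_mul_not_dvd hu a
  obtain ⟨l, τ, rfl, hτ⟩ := exists_eq_mul_pow_not_dvd_right hu b
  have hkl : k + l ≤ N := by
    have hlen := congrArg (fun t => Multiset.card (letters t)) h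
    have hpos := Multiset.card_pos.2 (mt letters_eq_zero.1 hu)
    simp only [letters_mul, letters_pow, Multiset.card_add, Multiset.card_nsmul] at hlen
    nlinarith
  obtain ⟨c, rfl⟩ : ∃ c, N = k + c + l := ⟨N - k - l, by omega⟩
  have hστ : σ * τ = u ^ c := by
    refine mul_right_cancel (b := u ^ l) (mul_left_cancel (a := u ^ k) ?_)
    calc u ^ k * (σ * τ * u ^ l) = u ^ k * σ * (τ * u ^ l) := by simp only [mul_assoc]
      _ = u ^ k * (u ^ c * u ^ l) := by rw [h, pow_add, pow_add, mul_assoc]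
  exact ⟨k, c, l, σ, τ, rfl, rfl, hστ, le_card_of_mul_eq_pow hconn hστ hσ hτ, rfl, hσ⟩

theorem exists_levi_prod [Std.Irrefl I] [Std.Symm I] (r : ℕ → Trace A I) (n : ℕ) {a b T : Trace A I}
    (h : a * b = ((List.range n).map r).prod * T) :
    ∃ (p w : ℕ → Trace A I) (a' b' : Trace A I), (∀ j < n, r j = p j * w j) ∧
      a = ((List.range n).map p).prod * a' ∧ b = ((List.range n).map w).prod * b' ∧ a' * b' = T ∧
      (∀ j l, j < l → l < n → Indep (w j) (p l)) ∧ ∀ j < n, Indep (w j) a' := by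
  induction n generalizing T with
  | zero => exact ⟨1, 1, a, b, by simp, by simp, by simp, by simpa using h, by simp, by simp⟩
  | succ n ih =>
    rw [List.prod_range_succ, mul_assoc] at h
    obtain ⟨p, w, a'', b'', hr, rfl, rfl, hab, hpw, hwa⟩ := ih h
    obtain ⟨ρ, v, w', σ, rfl, hrn, rfl, rfl, hvw⟩ := exists_levi hab
    refine ⟨Function.update p n ρ, Function.update w n w', v, σ, fun j hj => ?_,
      by rw [List.prod_map_range_update, mul_assoc],
      by rw [List.prod_map_range_update, mul_assoc], rfl,
      fun j l hjl hl => ?_, fun j hj => ?_⟩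
    · rcases (Nat.lt_succ_iff.1 hj).lt_or_eq with hj | rfl
      · simp only [Function.update_of_ne hj.ne, hr j hj]
      · simp only [Function.update_self, hrn]
    · rw [Function.update_of_ne (hjl.trans_le (Nat.lt_succ_iff.1 hl)).ne]
      rcases (Nat.lt_succ_iff.1 hl).lt_or_eq with hl | rfl
      · rw [Function.update_of_ne hl.ne]; exact hpw j l hjl hl
      · rw [Function.update_self]
        exact (hwa j hjl).mono le_rfl (by simp)
    · rcases (Nat.lt_succ_iff.1 hj).lt_or_eq with hj | rfl
      · rw [Function.update_of_ne hj.ne]; exact (hwa j hj).mono le_rfl (by simp)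
      · rw [Function.update_self]; exact hvw.symm

/-- The data of the theorem for the factors `y i, …, y (M - 1)`, where each earlier factor `j < i`
still owes `r j` towards its power of `u`. -/
structure IsPowerFactorization [Fintype A] (u : Trace A I) (y r : ℕ → Trace A I) (M i X : ℕ)
    (p : ℕ → ℕ → Trace A I) (s : ℕ → Trace A I) (xs c : ℕ → ℕ) : Prop where
  factor : ∀ k, i ≤ k → k < M → y k = ((List.range k).map (p k)).prod * u ^ xs k * s k
  remainder : ∀ j < i, r j = (((List.range M).drop i).map (p · j)).prod
  closes : ∀ j, i ≤ j → j < M → s j * (((List.range M).drop (j + 1)).map (p · j)).prod = u ^ c j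
  le_card : ∀ j, i ≤ j → j < M → c j ≤ Fintype.card A
  not_dvd : ∀ j, i ≤ j → j < M → ¬ u ∣ s j
  exponent : X = ∑ k ∈ Finset.Ico i M, (xs k + c k)
  indep_row : ∀ i' j k l, j < l → l < k → k < i' → i ≤ k → i' < M → Indep (p i' j) (p k l)
  indep_col : ∀ i' j k, j < k → k < i' → i ≤ k → i' < M → Indep (p i' j) (u ^ xs k * s k)

namespace IsPowerFactorization

variable [Fintype A] {u : Trace A I} {y r : ℕ → Trace A I} {M i X : ℕ}
  {p : ℕ → ℕ → Trace A I} {s : ℕ → Trace A I} {xs c : ℕ → ℕ}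

lemma letters_le (hF : IsPowerFactorization u y r M i X p s xs c) {i' j : ℕ} (hj : j < i)
    (hi' : i ≤ i') (hi'M : i' < M) : letters (p i' j) ≤ letters (r j) :=
  hF.remainder j hj ▸ letters_le_prod_of_mem (List.mem_drop_range.2 ⟨hi', hi'M⟩)

lemma cons {w p₀ : ℕ → Trace A I} {σ τ : Trace A I} {k₀ c₀ : ℕ}
    (hF : IsPowerFactorization u y (Function.update w i τ) M (i + 1) X p s xs c) (hi : i < M)
    (hr : ∀ j < i, r j = p₀ j * w j) (hy : y i = ((List.range i).map p₀).prod * (u ^ k₀ * σ))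
    (hστ : σ * τ = u ^ c₀) (hc₀ : c₀ ≤ Fintype.card A) (hσ : ¬ u ∣ σ)
    (hrow : ∀ j l, j < l → l < i → Indep (w j) (p₀ l))
    (hcol : ∀ j < i, Indep (w j) (u ^ k₀ * σ)) :
    IsPowerFactorization u y r M i (k₀ + c₀ + X) (Function.update p i p₀)
      (Function.update s i σ) (Function.update xs i k₀) (Function.update c i c₀) where
  factor k hik hkM := by
    rcases hik.lt_or_eq with hik | rfl
    · simp only [Function.update_of_ne hik.ne']; exact hF.factor k hik hkM
    · simp only [Function.update_self, hy, mul_assoc]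
  remainder j hj := by
    rw [List.drop_range_eq_cons hi, List.map_cons, List.prod_cons, Function.update_self, hr j hj,
      List.map_drop_range_update p (· j), ← hF.remainder j (by omega), Function.update_of_ne hj.ne]
  closes j hij hjM := by
    rcases hij.lt_or_eq with hij | rfl
    · simp only [Function.update_of_ne hij.ne']
      rw [List.map_congr_left fun k hk => by
        rw [Function.update_of_ne (by have := (List.mem_drop_range.1 hk).1; omega)]]
      exact hF.closes j hij hjM
    · rw [Function.update_self, Function.update_self, List.map_drop_range_update p (· i),
        ← hF.remainder i (by omega), Function.update_self, hστ]
  le_card j hij hjM := by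
    rcases hij.lt_or_eq with hij | rfl
    · rw [Function.update_of_ne hij.ne']; exact hF.le_card j hij hjM
    · rwa [Function.update_self]
  not_dvd j hij hjM := by
    rcases hij.lt_or_eq with hij | rfl
    · rw [Function.update_of_ne hij.ne']; exact hF.not_dvd j hij hjM
    · rwa [Function.update_self]
  exponent := by
    have hsum : ∑ k ∈ Finset.Ico (i + 1) M,
        (Function.update xs i k₀ k + Function.update c i c₀ k) = X := by
      refine hF.exponent ▸ Finset.sum_congr rfl fun k hk => ?_
      have hki : k ≠ i := by have := (Finset.mem_Ico.1 hk).1; omega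
      rw [Function.update_of_ne hki, Function.update_of_ne hki]
    rw [Finset.sum_eq_sum_Ico_succ_bot hi, Function.update_self, Function.update_self, hsum]
  indep_row i' j k l hjl hlk hki' hik hi'M := by
    rw [Function.update_of_ne (by omega : i' ≠ i)]
    rcases hik.lt_or_eq with hik | rfl
    · rw [Function.update_of_ne hik.ne']; exact hF.indep_row i' j k l hjl hlk hki' hik hi'M
    · rw [Function.update_self]
      refine (hrow j l hjl hlk).mono ?_ le_rfl
      simpa [Function.update_of_ne (hjl.trans hlk).ne] using
        hF.letters_le (by omega : j < i + 1) hki' hi'M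
  indep_col i' j k hjk hki' hik hi'M := by
    rw [Function.update_of_ne (by omega : i' ≠ i)]
    rcases hik.lt_or_eq with hik | rfl
    · simp only [Function.update_of_ne hik.ne']; exact hF.indep_col i' j k hjk hki' hik hi'M
    · rw [Function.update_self, Function.update_self]
      refine (hcol j hjk).mono ?_ le_rfl
      simpa [Function.update_of_ne hjk.ne] using hF.letters_le (by omega : j < i + 1) hki' hi'M

lemma last (hF : IsPowerFactorization u y r M i X p s xs c) (hiM : i < M) :
    s (M - 1) = 1 ∧ c (M - 1) = 0 := by
  have h := hF.closes (M - 1) (by omega) (by omega)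
  rw [List.drop_eq_nil_of_le (by simp; omega), List.map_nil, List.prod_nil, mul_one] at h
  have hc : c (M - 1) = 0 := by
    by_contra hc
    refine hF.not_dvd (M - 1) (by omega) (by omega) ⟨u ^ (c (M - 1) - 1), ?_⟩
    rw [h, ← pow_succ', Nat.sub_add_cancel (Nat.pos_of_ne_zero hc)]
  exact ⟨by rw [h, hc, pow_zero], hc⟩

end IsPowerFactorization

theorem exists_isPowerFactorization [Fintype A] [Std.Irrefl I] [Std.Symm I]
    {u : Trace A I} (hu : u ≠ 1) (hconn : TraceConnected A I u) (y : ℕ → Trace A I)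
    {M i : ℕ} (hiM : i ≤ M)
    (r : ℕ → Trace A I) (X : ℕ)
    (h : ((List.range i).map r).prod * u ^ X = (((List.range M).drop i).map y).prod) :
    ∃ p s xs c, IsPowerFactorization u y r M i X p s xs c := by
  induction hiM using Nat.decreasingInduction generalizing r X with
  | self =>
    rw [List.drop_eq_nil_of_le (by simp), List.map_nil, List.prod_nil, mul_eq_one,
      pow_eq_one hu] at h
    obtain ⟨hr, rfl⟩ := h
    refine ⟨1, 1, 0, 0, ⟨by omega, fun j hj => ?_, by omega, by omega, by omega, by simp,
      by omega, by omega⟩⟩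
    rw [List.drop_eq_nil_of_le (by simp), List.map_nil, List.prod_nil, ← letters_eq_zero,
      ← Multiset.le_zero, ← letters_one, ← hr]
    exact letters_le_prod_of_mem (List.mem_range.2 hj)
  | of_succ i hi ih =>
    rw [List.drop_range_eq_cons hi, List.map_cons, List.prod_cons] at h
    obtain ⟨p₀, w, a', b', hr, hy, hrest, hab, hrow, hcol⟩ := exists_levi_prod r i h.symm
    obtain ⟨k₀, c₀, l, σ, τ, rfl, rfl, hστ, hc₀, rfl, hσ⟩ :=
      exists_factorization_of_mul_eq_pow hu hconn hab
    obtain ⟨p, s, xs, c, hF⟩ :=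
      ih (Function.update w i τ) l (by rw [List.prod_map_range_update, hrest, mul_assoc])
    exact ⟨_, _, _, _, hF.cons hi hr hy hστ hc₀ hσ hrow hcol⟩

end Trace

/-- Factorizations of a power of a connected trace into m factors. -/
theorem power_factorization_many (A : Type) [Fintype A] (I : A → A → Prop)
    (hirr : ∀ a, ¬ I a a) (hsym : ∀ a b, I a b → I b a)
    (u : Trace A I) (hu : u ≠ 1) (hconn : TraceConnected A I u)
    (m : ℕ) (hm : 2 ≤ m) (x : ℕ) (y : Fin m → Trace A I)
    (h : u ^ x = (List.ofFn y).prod) :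
    ∃ (p : Fin m → Fin m → Trace A I) (s : Fin m → Trace A I)
      (xs : Fin m → ℕ) (c : Fin m → ℕ),
      (∀ i : Fin m,
        y i = (((List.finRange m).take i.val).map (p i)).prod * u ^ xs i * s i) ∧
      (∀ i j k l : Fin m, j < l → l < k → k < i → TraceIndep A I (p i j) (p k l)) ∧
      (∀ i j k : Fin m, j < k → k < i → TraceIndep A I (p i j) (u ^ xs k * s k)) ∧
      s ⟨m - 1, by omega⟩ = 1 ∧
      (∀ j : Fin m, j.val < m - 1 →
        s j * (((List.finRange m).drop (j.val + 1)).map (fun i => p i j)).prod = u ^ c j ∧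
        c j ≤ Fintype.card A) ∧
      x = (∑ i : Fin m, xs i) + ∑ j ∈ Finset.univ.filter (fun j : Fin m => j.val < m - 1), c j := by
  have : Std.Irrefl I := ⟨hirr⟩
  have : Std.Symm I := ⟨hsym⟩
  set y' : ℕ → Trace A I := fun k => if hk : k < m then y ⟨k, hk⟩ else 1
  have hy : List.ofFn y = (List.range m).map y' := by
    rw [List.ofFn_eq_map, ← List.map_coe_finRange_eq_range, List.map_map]
    exact List.map_congr_left fun i _ => by simp [y']
  obtain ⟨p, s, xs, c, hF⟩ :=
    Trace.exists_isPowerFactorization hu hconn y' (Nat.zero_le m) 1 x (by simpa [hy] using h)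
  obtain ⟨hs, hc⟩ := hF.last (by omega)
  refine ⟨fun i j => p i j, fun i => s i, fun i => xs i, fun i => c i, fun i => ?_,
    fun i j k l hjl hlk hki => (hF.indep_row i j k l hjl hlk hki (Nat.zero_le _) i.isLt).traceIndep,
    fun i j k hjk hki => (hF.indep_col i j k hjk hki (Nat.zero_le _) i.isLt).traceIndep, hs,
    fun j _ => ⟨?_, hF.le_card j (Nat.zero_le _) j.isLt⟩, ?_⟩
  · dsimp only
    rw [List.map_take_finRange (p i), List.take_range, min_eq_left i.isLt.le,
      ← hF.factor i (Nat.zero_le _) i.isLt]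
    simp [y']
  · dsimp only
    rw [List.map_drop_finRange (p · j)]
    exact hF.closes j (Nat.zero_le _) j.isLt
  · rw [hF.exponent, ← Finset.range_eq_Ico, Finset.sum_add_distrib,
      ← Fin.sum_univ_eq_sum_range, ← Fin.sum_univ_eq_sum_range, Finset.sum_filter_of_ne]
    intro j _ hj
    have : j.val ≠ m - 1 := fun h' => hj (h' ▸ hc)
    omega
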